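/- arXiv:2209.07605 — 15 statements merged into one kernel-verified Lean document; each statement's English description precedes it below -/
import Mathlib

section
/- Let (X,G) be a CR-dynamical system. Then the set illegal(G) of illegal points of (X,G) is open in X (equivalently, the set legal(G) of legal points is closed in X). -/
/-- A trajectory of `x` in the CR-dynamical system `(X, G)`:
a sequence `(x₁, x₂, x₃, …)` (indexed here from `0`) with `x₁ = x` and
`(xᵢ, xᵢ₊₁) ∈ G` for every `i`. -/
def IsTraj {X : Type*} (G : Set (X × X)) (x : X) (s : ℕ → X) : Prop :=
  s 0 = x ∧ ∀ n : ℕ, (s n, s (n + 1)) ∈ G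

/-- `RelImg G n A` is `G^n(A)`: all `y` such that for some `x ∈ A` there are
`x₁, …, x_{n+1}` with `x₁ = x`, `x_{n+1} = y` and `(xᵢ, xᵢ₊₁) ∈ G` for each `i ≤ n`.
For `n = 0` this gives `A` itself. -/
def RelImg {X : Type*} (G : Set (X × X)) (n : ℕ) (A : Set X) : Set X :=
  {y | ∃ x ∈ A, ∃ f : ℕ → X, f 0 = x ∧ f n = y ∧ ∀ i < n, (f i, f (i + 1)) ∈ G}

/-- The inverse relation `G⁻¹ = {(y, x) | (x, y) ∈ G}`. -/
def RelInv {X : Type*} (G : Set (X × X)) : Set (X × X) := Prod.swap ⁻¹' G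

/-- `x` is a legal point of `(X, G)`: it has at least one trajectory. -/
def Legal {X : Type*} (G : Set (X × X)) (x : X) : Prop := ∃ s : ℕ → X, IsTraj G x s

/-- `U_G^⊕(x)`: the union of the forward orbits of all trajectories of `x`. -/
def UOrb {X : Type*} (G : Set (X × X)) (x : X) : Set X :=
  ⋃ s ∈ {s : ℕ → X | IsTraj G x s}, Set.range s

/-- The set of 1-transitive points: legal points all of whose trajectories have
dense forward orbit. -/
def Trans1 {X : Type*} [MetricSpace X] (G : Set (X × X)) : Set X :=
  {x | Legal G x ∧ ∀ s : ℕ → X, IsTraj G x s → Dense (Set.range s)}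

/-- The set of 2-transitive points: points having a trajectory with dense forward
orbit. -/
def Trans2 {X : Type*} [MetricSpace X] (G : Set (X × X)) : Set X :=
  {x | ∃ s : ℕ → X, IsTraj G x s ∧ Dense (Set.range s)}

/-- The set of 3-transitive points: legal points `x` with `U_G^⊕(x)` dense. -/
def Trans3 {X : Type*} [MetricSpace X] (G : Set (X × X)) : Set X :=
  {x | Legal G x ∧ Dense (UOrb G x)}

/-- The set of intransitive points: legal points that are not 3-transitive. -/
def Intrans {X : Type*} [MetricSpace X] (G : Set (X × X)) : Set X :=
  {x | Legal G x ∧ ¬ Dense (UOrb G x)}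

/-- `(X, G)` is transitive: for all nonempty open `U, V` there is `n ≥ 0` with
`G^n(U) ∩ V ≠ ∅`. -/
def CRTransitive {X : Type*} [MetricSpace X] (G : Set (X × X)) : Prop :=
  ∀ U V : Set X, IsOpen U → U.Nonempty → IsOpen V → V.Nonempty →
    ∃ n : ℕ, (RelImg G n U ∩ V).Nonempty

/-- `(X, G)` is +transitive: for all nonempty open `U, V` there is `n ≥ 1` with
`G^n(U) ∩ V ≠ ∅`. -/
def CRPlusTransitive {X : Type*} [MetricSpace X] (G : Set (X × X)) : Prop :=
  ∀ U V : Set X, IsOpen U → U.Nonempty → IsOpen V → V.Nonempty →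
    ∃ n : ℕ, 0 < n ∧ (RelImg G n U ∩ V).Nonempty

/-- The set of illegal points of `(X, G)` is open in `X`. -/
theorem stmt3 {X : Type*} [MetricSpace X] [CompactSpace X] [Nonempty X]
    (G : Set (X × X)) (hGc : IsClosed G) (hGne : G.Nonempty) :
    IsOpen {x : X | ¬ Legal G x} := by
  have hKclosed : ∀ n : ℕ, IsClosed {s : ℕ → X | ∀ i < n, (s i, s (i + 1)) ∈ G} := by
    intro n
    have : {s : ℕ → X | ∀ i < n, (s i, s (i + 1)) ∈ G}
        = ⋂ i : ℕ, ⋂ _ : i < n, (fun s : ℕ → X => (s i, s (i + 1))) ⁻¹' G := by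
      ext s; simp [Set.mem_iInter]
    rw [this]
    exact isClosed_iInter fun i => isClosed_iInter fun _ =>
      hGc.preimage ((continuous_apply i).prodMk (continuous_apply (i + 1)))
  have key : {x : X | Legal G x}
      = ⋂ n : ℕ, (fun s : ℕ → X => s 0) '' {s | ∀ i < n, (s i, s (i + 1)) ∈ G} := by
    ext x
    constructor
    · rintro ⟨s, h0, hs⟩
      exact Set.mem_iInter.2 fun n => ⟨s, fun i _ => hs i, h0⟩
    · intro hx
      set F : ℕ → Set (ℕ → X) :=
        fun n => {s | s 0 = x ∧ ∀ i < n, (s i, s (i + 1)) ∈ G} with hF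
      have hFclosed : ∀ n, IsClosed (F n) := by
        intro n
        have : F n = ((fun s : ℕ → X => s 0) ⁻¹' {x}) ∩
            {s | ∀ i < n, (s i, s (i + 1)) ∈ G} := by
          ext s; simp [hF, Set.mem_setOf_eq]
        rw [this]
        exact (isClosed_singleton.preimage (continuous_apply 0)).inter (hKclosed n)
      have hFne : ∀ n, (F n).Nonempty := by
        intro n
        obtain ⟨s, hs, h0⟩ := Set.mem_iInter.1 hx n
        exact ⟨s, h0, hs⟩
      have hFsub : ∀ n, F (n + 1) ⊆ F n := by
        intro n s hs
        exact ⟨hs.1, fun i hi => hs.2 i (Nat.lt_succ_of_lt hi)⟩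
      have hne : (⋂ n, F n).Nonempty :=
        IsCompact.nonempty_iInter_of_sequence_nonempty_isCompact_isClosed
          F hFsub hFne ((hFclosed 0).isCompact) hFclosed
      obtain ⟨s, hs⟩ := hne
      have hs' : ∀ n, s ∈ F n := Set.mem_iInter.1 hs
      refine ⟨s, (hs' 0).1, fun i => (hs' (i + 1)).2 i (Nat.lt_succ_self i)⟩
  have : {x : X | ¬ Legal G x} = {x : X | Legal G x}ᶜ := rfl
  rw [this, isOpen_compl_iff, key]
  refine isClosed_iInter fun n => ?_
  exact ((hKclosed n).isCompact.image (continuous_apply 0)).isClosed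
end

section
/- Let (X,G) be a CR-dynamical system such that X has an isolated point. If trans_1(G) ≠ ∅, then trans_1(G) contains an isolated point of X; moreover, if X is infinite, then trans_1(G) contains exactly one isolated point of X. -/
section Aux

variable {X : Type*} [MetricSpace X] {G : Set (X × X)}

lemma traj_shift {x : X} {s : ℕ → X} (h : IsTraj G x s) (i : ℕ) :
    IsTraj G (s i) (fun k => s (i + k)) := by
  refine ⟨by simp, fun n => ?_⟩
  simpa [Nat.add_assoc] using h.2 (i + n)

lemma isolated_of_open_finite {O F : Set X} (hO : IsOpen O) (hF : F.Finite)
    (hsub : O ⊆ F) {p : X} (hp : p ∈ O) : IsOpen ({p} : Set X) := by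
  have hclosed : IsClosed (F \ {p}) := (hF.subset Set.diff_subset).isClosed
  have heq : ({p} : Set X) = O ∩ (F \ {p})ᶜ := by
    ext q
    simp only [Set.mem_singleton_iff, Set.mem_inter_iff, Set.mem_compl_iff,
      Set.mem_diff]
    constructor
    · rintro rfl; exact ⟨hp, fun hq => hq.2 rfl⟩
    · rintro ⟨hqO, hq⟩
      by_contra hne
      exact hq ⟨hsub hqO, hne⟩
  rw [heq]
  exact hO.inter hclosed.isOpen_compl

lemma key (G : Set (X × X)) :
    ∀ n : ℕ, ∀ f : ℕ → X, f 0 ∈ Trans1 G → (∀ i < n, (f i, f (i + 1)) ∈ G) →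
      IsOpen ({f n} : Set X) → Legal G (f n) →
      ∃ z ∈ Trans1 G, IsOpen ({z} : Set X) := by
  intro n
  induction n using Nat.strong_induction_on with
  | _ n IH =>
  intro f hx hedge hopen hlegal
  by_cases hT : f n ∈ Trans1 G
  · exact ⟨f n, hT, hopen⟩
  have hbad : ∃ u, IsTraj G (f n) u ∧ ¬ Dense (Set.range u) := by
    by_contra hc
    push_neg at hc
    exact hT ⟨hlegal, hc⟩
  obtain ⟨u, hu, hund⟩ := hbad
  set w : ℕ → X := fun k => if k < n then f k else u (k - n) with hw
  have hw0 : w 0 = f 0 := by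
    rcases Nat.eq_zero_or_pos n with h0 | h0
    · subst h0
      simp [hw, hu.1]
    · simp [hw, h0]
  have hwt : IsTraj G (f 0) w := by
    refine ⟨hw0, fun k => ?_⟩
    by_cases h2 : k < n
    · by_cases h1 : k + 1 < n
      · simpa [hw, h1, h2] using hedge k h2
      · have hkn : k + 1 = n := by omega
        have e1 : w k = f k := by simp [hw, h2]
        have e2 : w (k + 1) = f (k + 1) := by
          have hz : k + 1 - n = 0 := by omega
          simp [hw, h1, hz, hu.1, hkn]
        rw [e1, e2]
        exact hedge k h2
    · have h1 : ¬ k + 1 < n := by omega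
      have e1 : w k = u (k - n) := by simp [hw, h2]
      have e2 : w (k + 1) = u (k - n + 1) := by
        have h3 : k + 1 - n = k - n + 1 := by omega
        simp [hw, h1, h3]
      rw [e1, e2]
      exact hu.2 (k - n)
  have hdense : Dense (Set.range w) := hx.2 w hwt
  have hrange : Set.range w ⊆ f '' Set.Iio n ∪ Set.range u := by
    rintro _ ⟨k, rfl⟩
    by_cases hk : k < n
    · exact Or.inl ⟨k, hk, by simp [hw, hk]⟩
    · exact Or.inr ⟨k - n, by simp [hw, hk]⟩
  have hfin : (f '' Set.Iio n).Finite := (Set.finite_Iio n).image f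
  have hsub2 : closure (Set.range w) ⊆ f '' Set.Iio n ∪ closure (Set.range u) := by
    refine closure_minimal ?_ (hfin.isClosed.union isClosed_closure)
    intro y hy
    rcases hrange hy with h | h
    · exact Or.inl h
    · exact Or.inr (subset_closure h)
  set O : Set X := (closure (Set.range u))ᶜ with hO
  have hOopen : IsOpen O := isClosed_closure.isOpen_compl
  have hOsub : O ⊆ f '' Set.Iio n := by
    intro q hq
    rcases hsub2 (hdense q) with h | h
    · exact h
    · exact absurd h hq
  have hOne : O.Nonempty := by
    by_contra hc
    rw [Set.not_nonempty_iff_eq_empty] at hc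
    apply hund
    intro y
    by_contra hy
    have : y ∈ O := hy
    simp [hc] at this
  obtain ⟨p, hp⟩ := hOne
  obtain ⟨i, hi, hpi⟩ := hOsub hp
  have hpiso : IsOpen ({p} : Set X) := isolated_of_open_finite hOopen hfin hOsub hp
  have hpleg : Legal G (f i) := by
    refine ⟨fun k => w (i + k), ?_⟩
    have := traj_shift hwt i
    have hi' : i < n := hi
    have hwi : w i = f i := by simp [hw, hi']
    rwa [hwi] at this
  have hiopen : IsOpen ({f i} : Set X) := by rw [hpi]; exact hpiso
  exact IH i hi f hx (fun j hj => hedge j (hj.trans hi)) hiopen hpleg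

lemma unique_iso {a b : X} (ha : a ∈ Trans1 G) (hb : b ∈ Trans1 G)
    (hbop : IsOpen ({b} : Set X)) (haop : IsOpen ({a} : Set X))
    (hinf : Infinite X) : a = b := by
  by_contra hne
  obtain ⟨s, hs⟩ := ha.1
  have hds : Dense (Set.range s) := ha.2 s hs
  obtain ⟨y, hy1, hy2⟩ := mem_closure_iff_nhds.mp (hds b) {b} (hbop.mem_nhds rfl)
  obtain ⟨m, hm⟩ := hy2
  have hsm : s m = b := hm.trans hy1
  have ht : IsTraj G b (fun k => s (m + k)) := by
    have := traj_shift hs m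
    rwa [hsm] at this
  have hdt : Dense (Set.range fun k => s (m + k)) := hb.2 _ ht
  obtain ⟨z, hz1, hz2⟩ := mem_closure_iff_nhds.mp (hdt a) {a} (haop.mem_nhds rfl)
  obtain ⟨k, hk⟩ := hz2
  have hsk : s (m + k) = a := hk.trans hz1
  have hm0 : 0 < m := by
    rcases Nat.eq_zero_or_pos m with h0 | h0
    · subst h0; exact absurd (hs.1.symm.trans hsm) hne
    · exact h0
  set L : ℕ := m + k with hL
  have hL0 : 0 < L := by omega
  have hsL : s L = a := hsk
  set p : ℕ → X := fun j => s (j % L) with hp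
  have hpt : IsTraj G a p := by
    refine ⟨by simp [hp, hs.1], fun j => ?_⟩
    set r : ℕ := j % L with hr
    have hrL : r < L := Nat.mod_lt _ hL0
    have hj : j = L * (j / L) + r := by
      rw [hr]
      exact (Nat.div_add_mod j L).symm
    have hnext : (j + 1) % L = (r + 1) % L := by
      conv_lhs => rw [hj, Nat.add_assoc]
      exact Nat.mul_add_mod _ _ _
    by_cases hcase : r + 1 < L
    · have : (j + 1) % L = r + 1 := by
        rw [hnext, Nat.mod_eq_of_lt hcase]
      simp only [hp]
      rw [this]
      exact hs.2 r
    · have hrL1 : r + 1 = L := by omega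
      have : (j + 1) % L = 0 := by
        rw [hnext, hrL1, Nat.mod_self]
      simp only [hp]
      rw [this]
      have h0 : s 0 = s (r + 1) := by
        rw [hs.1, hrL1, hsL]
      rw [h0]
      exact hs.2 r
  have hdp : Dense (Set.range p) := ha.2 p hpt
  have hrp : Set.range p ⊆ s '' Set.Iio L := by
    rintro _ ⟨j, rfl⟩
    exact ⟨j % L, Nat.mod_lt _ hL0, rfl⟩
  have hfinL : (s '' Set.Iio L).Finite := (Set.finite_Iio L).image s
  have huniv : (Set.univ : Set X) ⊆ s '' Set.Iio L := by
    intro y _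
    exact closure_minimal hrp hfinL.isClosed (hdp y)
  have : Finite X := Set.finite_univ_iff.mp (hfinL.subset huniv)
  exact absurd this (by rw [not_finite_iff_infinite]; exact hinf)

end Aux

/-- If `X` has an isolated point and `trans₁(G) ≠ ∅`, then `trans₁(G)` contains an
isolated point of `X`; moreover, if `X` is infinite, then `trans₁(G)` contains
exactly one isolated point of `X`. -/
theorem stmt4 {X : Type*} [MetricSpace X] [CompactSpace X] [Nonempty X]
    (G : Set (X × X)) (hGc : IsClosed G) (hGne : G.Nonempty)
    (hiso : ∃ x : X, IsOpen ({x} : Set X))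
    (h : (Trans1 G).Nonempty) :
    (∃ x ∈ Trans1 G, IsOpen ({x} : Set X)) ∧
    (Infinite X → ∃! x : X, x ∈ Trans1 G ∧ IsOpen ({x} : Set X)) := by
  obtain ⟨x, hx⟩ := h
  obtain ⟨s, hs⟩ := hx.1
  have hd : Dense (Set.range s) := hx.2 s hs
  obtain ⟨a, ha⟩ := hiso
  obtain ⟨y, hy1, hy2⟩ := mem_closure_iff_nhds.mp (hd a) {a} (ha.mem_nhds rfl)
  obtain ⟨n, hn⟩ := hy2
  have hsn : s n = a := hn.trans hy1
  have hmain : ∃ z ∈ Trans1 G, IsOpen ({z} : Set X) := by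
    refine key G n s (by rw [hs.1]; exact hx) (fun i _ => hs.2 i)
      (by rw [hsn]; exact ha) ⟨fun k => s (n + k), traj_shift hs n⟩
  obtain ⟨z, hz, hzo⟩ := hmain
  refine ⟨⟨z, hz, hzo⟩, fun hinf => ⟨z, ⟨hz, hzo⟩, ?_⟩⟩
  rintro y ⟨hy1, hy2⟩
  exact unique_iso hy1 hz hzo hy2 hinf
end

section
/- Let (X,G) be a CR-dynamical system such that X has an isolated point. If trans_2(G) ≠ ∅, then trans_2(G) contains an isolated point of X. -/
/-!
Follow a trajectory `s` with dense orbit. Since `X` has an isolated point `x₀` and the orbit is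
dense, the orbit passes through `x₀`; let `s n` be the first isolated point it visits. The tail
`(s n, s (n+1), …)` is a trajectory of `s n`, and its orbit contains the whole orbit of `s` except
for the finitely many points `s 0, …, s (n-1)`. None of these is isolated, and removing finitely
many non-isolated points from a dense subset of a T1 space leaves it dense.
-/

open Set

section Topology

variable {X : Type*} [TopologicalSpace X]

theorem Dense.mem_of_isOpen_singleton {s : Set X} (hs : Dense s) {x : X}
    (hx : IsOpen ({x} : Set X)) : x ∈ s := by
  obtain ⟨y, rfl, hy⟩ := hs.inter_open_nonempty {x} hx (singleton_nonempty x)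
  exact hy

variable [T1Space X]

theorem Dense.sdiff_singleton_of_not_isOpen {s : Set X} (hs : Dense s) {x : X}
    (hx : ¬IsOpen ({x} : Set X)) : Dense (s \ {x}) :=
  hs.inter_of_isOpen_right (dense_compl_singleton_iff_not_open.2 hx) isOpen_compl_singleton

theorem Dense.sdiff_finite_of_not_isOpen {s t : Set X} (hs : Dense s) (ht : t.Finite)
    (hiso : ∀ x ∈ t, ¬IsOpen ({x} : Set X)) : Dense (s \ t) := by
  induction t, ht using Set.Finite.induction_on with
  | empty => simpa using hs
  | @insert a t _ _ ih =>
    rw [← union_singleton, ← sdiff_sdiff]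
    exact (ih fun x hx => hiso x (mem_insert_of_mem a hx)).sdiff_singleton_of_not_isOpen
      (hiso a (mem_insert a t))

end Topology

section Trajectory

variable {X : Type*}

theorem IsTraj.shift {G : Set (X × X)} {x : X} {s : ℕ → X} (hs : IsTraj G x s) (n : ℕ) :
    IsTraj G (s n) (fun k => s (k + n)) :=
  ⟨by simp, fun k => by simpa [Nat.add_right_comm k n 1] using hs.2 (k + n)⟩

theorem range_sdiff_image_Iio_subset_range_shift (s : ℕ → X) (n : ℕ) :
    range s \ s '' Iio n ⊆ range (fun k => s (k + n)) := by
  rintro _ ⟨⟨i, rfl⟩, hi⟩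
  have hni : n ≤ i := le_of_not_gt fun hin => hi ⟨i, hin, rfl⟩
  exact ⟨i - n, by simp only [Nat.sub_add_cancel hni]⟩

end Trajectory

theorem stmt5_general {X : Type*} [MetricSpace X]
    (G : Set (X × X))
    (hiso : ∃ x : X, IsOpen ({x} : Set X))
    (h : (Trans2 G).Nonempty) :
    ∃ x ∈ Trans2 G, IsOpen ({x} : Set X) := by
  obtain ⟨_, s, hs, hd⟩ := h
  obtain ⟨x₀, hx₀⟩ := hiso
  have hhit : ∃ i, IsOpen ({s i} : Set X) := by
    obtain ⟨i, rfl⟩ := hd.mem_of_isOpen_singleton hx₀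
    exact ⟨i, hx₀⟩
  classical
  set n := Nat.find hhit
  have hbefore : ∀ y ∈ s '' Iio n, ¬IsOpen ({y} : Set X) := by
    rintro _ ⟨i, hi, rfl⟩
    exact Nat.find_min hhit hi
  have htail : Dense (range fun k => s (k + n)) :=
    (hd.sdiff_finite_of_not_isOpen ((finite_Iio n).image s) hbefore).mono
      (range_sdiff_image_Iio_subset_range_shift s n)
  exact ⟨s n, ⟨_, hs.shift n, htail⟩, Nat.find_spec hhit⟩

/-- If `X` has an isolated point and `trans₂(G) ≠ ∅`, then `trans₂(G)` contains an
isolated point of `X`. -/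
theorem stmt5 {X : Type*} [MetricSpace X] [CompactSpace X] [Nonempty X]
    (G : Set (X × X)) (hGc : IsClosed G) (hGne : G.Nonempty)
    (hiso : ∃ x : X, IsOpen ({x} : Set X))
    (h : (Trans2 G).Nonempty) :
    ∃ x ∈ Trans2 G, IsOpen ({x} : Set X) :=
  stmt5_general G hiso h
end

section
/- Let (X,G) be a CR-dynamical system such that X is infinite, let x be an isolated point of X and let y ∈ X. If (x,y) ∈ G, then y ∉ trans_1(G). -/
/-- If `X` is infinite, `x` is an isolated point of `X` and `(x, y) ∈ G`, then
`y ∉ trans₁(G)`. -/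
theorem stmt7 {X : Type*} [MetricSpace X] [CompactSpace X] [Nonempty X] [Infinite X]
    (G : Set (X × X)) (hGc : IsClosed G) (hGne : G.Nonempty)
    (x y : X) (hx : IsOpen ({x} : Set X)) (hxy : (x, y) ∈ G) :
    y ∉ Trans1 G := by
  rintro ⟨⟨s, hs⟩, hdense⟩
  -- x lies on the trajectory s since its range is dense and {x} is open
  obtain ⟨z, hz1, hz2⟩ := (hdense s hs).inter_open_nonempty {x} hx ⟨x, rfl⟩
  obtain ⟨n, hn⟩ := hz2
  rw [Set.mem_singleton_iff] at hz1
  subst hz1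
  -- key modular arithmetic fact
  have key : ∀ k : ℕ, (k + 1) % (n + 1) = (k % (n + 1) + 1) % (n + 1) := by
    intro k
    have hk := Nat.mod_add_div k (n + 1)
    have h1 : k + 1 = k % (n + 1) + 1 + (n + 1) * (k / (n + 1)) := by omega
    rw [h1, Nat.add_mul_mod_self_left]
  -- periodic trajectory of y with finite range
  set t : ℕ → X := fun k => s (k % (n + 1)) with ht_def
  have ht : IsTraj G y t := by
    constructor
    · simp [ht_def, hs.1]
    · intro k
      rcases Nat.lt_or_ge (k % (n + 1)) n with h | h
      · have h2 : (k + 1) % (n + 1) = k % (n + 1) + 1 := by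
          rw [key k, Nat.mod_eq_of_lt (by omega)]
        simpa [ht_def, h2] using hs.2 (k % (n + 1))
      · have hlt : k % (n + 1) < n + 1 := Nat.mod_lt _ n.succ_pos
        have heq : k % (n + 1) = n := by omega
        have h2 : (k + 1) % (n + 1) = 0 := by
          rw [key k, heq, Nat.mod_self]
        simp only [ht_def, h2, heq, hn, hs.1]
        exact hxy
  have hfin : (Set.range t).Finite := by
    apply ((Set.finite_Iic n).image s).subset
    rintro _ ⟨k, rfl⟩
    exact ⟨k % (n + 1), Nat.lt_succ_iff.mp (Nat.mod_lt _ n.succ_pos), rfl⟩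
  have hd2 := hdense t ht
  have hclosed := hfin.isClosed.closure_eq
  rw [hd2.closure_eq] at hclosed
  exact Set.infinite_univ (hclosed ▸ hfin)
end

section
/- Let (X,G) be a CR-dynamical system and let x ∈ X. If x ∈ intrans(G), then for each legal point y ∈ X with (x,y) ∈ G we have y ∈ intrans(G); moreover, for each trajectory 𝐱 of x and each positive integer n, the n-th coordinate π_n(𝐱) belongs to intrans(G). -/
/-- Splicing: a trajectory of `s n` extends to a trajectory of `x` with larger range. -/
lemma splice {X : Type*} (G : Set (X × X)) (x : X) (s : ℕ → X) (hs : IsTraj G x s)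
    (n : ℕ) (t : ℕ → X) (ht : IsTraj G (s n) t) :
    ∃ u : ℕ → X, IsTraj G x u ∧ Set.range t ⊆ Set.range u := by
  refine ⟨fun k => if k < n then s k else t (k - n), ⟨?_, ?_⟩, ?_⟩
  · by_cases h : 0 < n
    · simp [h, hs.1]
    · simp only [h, if_neg]
      have hn : n = 0 := by omega
      simp [hn, ht.1, hs.1]
  · intro k
    rcases lt_trichotomy (k + 1) n with h | h | h
    · have hk : k < n := by omega
      simp only [if_pos h, if_pos hk]
      exact hs.2 k
    · have hk : k < n := by omega
      simp only [if_pos hk, if_neg (by omega : ¬ k + 1 < n)]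
      have : k + 1 - n = 0 := by omega
      rw [this, ht.1, ← h]
      exact hs.2 k
    · have hk : ¬ k < n := by omega
      simp only [if_neg hk, if_neg (by omega : ¬ k + 1 < n)]
      have : k + 1 - n = (k - n) + 1 := by omega
      rw [this]
      exact ht.2 (k - n)
  · rintro y ⟨m, rfl⟩
    refine ⟨m + n, ?_⟩
    simp [Nat.add_sub_cancel]

lemma uorb_subset {X : Type*} (G : Set (X × X)) (x : X) (s : ℕ → X) (hs : IsTraj G x s)
    (n : ℕ) : UOrb G (s n) ⊆ UOrb G x := by
  intro y hy
  simp only [UOrb, Set.mem_iUnion, Set.mem_setOf_eq] at hy ⊢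
  obtain ⟨t, ht, hyt⟩ := hy
  obtain ⟨u, hu, hsub⟩ := splice G x s hs n t ht
  exact ⟨u, hu, hsub hyt⟩

/-- If `x ∈ intrans(G)`, then every legal `y` with `(x, y) ∈ G` is intransitive,
and every coordinate of every trajectory of `x` is intransitive. -/

theorem stmt8 {X : Type*} [MetricSpace X] [CompactSpace X] [Nonempty X]
    (G : Set (X × X)) (hGc : IsClosed G) (hGne : G.Nonempty)
    (x : X) (hx : x ∈ Intrans G) :
    (∀ y : X, Legal G y → (x, y) ∈ G → y ∈ Intrans G) ∧
    (∀ s : ℕ → X, IsTraj G x s → ∀ n : ℕ, s n ∈ Intrans G) := by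
  obtain ⟨hxl, hxnd⟩ := hx
  have key : ∀ s : ℕ → X, IsTraj G x s → ∀ n : ℕ, s n ∈ Intrans G := by
    intro s hs n
    constructor
    · exact ⟨fun k => s (n + k), by simpa using hs.1.symm ▸ rfl, fun k => by
        have := hs.2 (n + k); simp [Nat.add_assoc] at this ⊢; exact this⟩
    · intro hd
      exact hxnd (hd.mono (uorb_subset G x s hs n))
  refine ⟨?_, key⟩
  intro y hy hxy
  obtain ⟨t, ht⟩ := hy
  have hs : IsTraj G x (fun k => if k = 0 then x else t (k - 1)) := by
    refine ⟨by simp, fun k => ?_⟩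
    cases k with
    | zero => simpa [ht.1] using hxy
    | succ m =>
      simp only [Nat.succ_ne_zero, if_neg, Nat.add_sub_cancel]
      simpa using ht.2 m
  have := key _ hs 1
  simpa [ht.1] using this
end

section
/- Let (X,G) be a CR-dynamical system and let x ∈ X be a point that is not an isolated point of X. If x ∈ trans_1(G), then for each legal point y ∈ X with (x,y) ∈ G we have y ∈ trans_1(G). -/
/-- If `x` is not an isolated point of `X` and `x ∈ trans₁(G)`, then every legal
`y` with `(x, y) ∈ G` satisfies `y ∈ trans₁(G)`. -/
theorem stmt9 {X : Type*} [MetricSpace X] [CompactSpace X] [Nonempty X]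
    (G : Set (X × X)) (hGc : IsClosed G) (hGne : G.Nonempty)
    (x : X) (hx : ¬ IsOpen ({x} : Set X)) (hx1 : x ∈ Trans1 G) :
    ∀ y : X, Legal G y → (x, y) ∈ G → y ∈ Trans1 G := by
  rintro y hy hxy
  refine ⟨hy, ?_⟩
  intro s hs
  set t : ℕ → X := fun n => Nat.rec x (fun k _ => s k) n with ht
  have htraj : IsTraj G x t := by
    refine ⟨rfl, ?_⟩
    intro n
    cases n with
    | zero => simpa [t, hs.1] using hxy
    | succ k => exact hs.2 k
  have hdense : Dense (Set.range t) := hx1.2 t htraj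
  have hsub : Set.range t ⊆ insert x (Set.range s) := by
    rintro _ ⟨n, rfl⟩
    cases n with
    | zero => exact Or.inl rfl
    | succ k => exact Or.inr ⟨k, rfl⟩
  rw [dense_iff_inter_open]
  intro U hU hUne
  by_contra h
  rw [Set.not_nonempty_iff_eq_empty] at h
  have hxU : x ∈ U := by
    obtain ⟨z, hzU, hzt⟩ := hdense.inter_open_nonempty U hU hUne
    rcases hsub hzt with h1 | h2
    · exact h1 ▸ hzU
    · exact absurd h (Set.nonempty_iff_ne_empty.mp ⟨z, hzU, h2⟩)
  have hV : IsOpen (U \ {x}) := hU.sdiff isClosed_singleton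
  have hVne : (U \ {x}).Nonempty := by
    by_contra hne
    rw [Set.not_nonempty_iff_eq_empty, Set.diff_eq_empty] at hne
    have hUx : U = {x} := Set.Subset.antisymm hne (by simpa using hxU)
    exact hx (hUx ▸ hU)
  obtain ⟨z, hzV, hzt⟩ := hdense.inter_open_nonempty _ hV hVne
  rcases hsub hzt with h1 | h2
  · exact hzV.2 h1
  · exact absurd h (Set.nonempty_iff_ne_empty.mp ⟨z, hzV.1, h2⟩)
end

section
/- Let (X,G) be a CR-dynamical system such that X has no isolated points and let x ∈ X. If x ∈ trans_1(G), then for each trajectory 𝐱 of x and each positive integer n, the n-th coordinate π_n(𝐱) belongs to trans_1(G). -/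
open Filter Topology

def spliceAt {X : Type*} (s t : ℕ → X) (n : ℕ) : ℕ → X :=
  fun k => if k < n then s k else t (k - n)

theorem range_spliceAt_subset {X : Type*} (s t : ℕ → X) (n : ℕ) :
    Set.range (spliceAt s t n) ⊆ s '' Set.Iio n ∪ Set.range t := by
  rintro _ ⟨k, rfl⟩
  by_cases hk : k < n
  · exact Or.inl ⟨k, hk, by simp [spliceAt, hk]⟩
  · exact Or.inr ⟨k - n, by simp [spliceAt, hk]⟩

namespace IsTraj

variable {X : Type*} {G : Set (X × X)} {x : X} {s t : ℕ → X}

theorem shift_s10 (hs : IsTraj G x s) (n : ℕ) : IsTraj G (s n) (fun k => s (n + k)) :=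
  ⟨rfl, fun k => hs.2 (n + k)⟩

theorem legal (hs : IsTraj G x s) (n : ℕ) : Legal G (s n) :=
  ⟨_, hs.shift_s10 n⟩

theorem spliceAt (hs : IsTraj G x s) (n : ℕ) (ht : IsTraj G (s n) t) :
    IsTraj G x (spliceAt s t n) := by
  refine ⟨?_, fun k => ?_⟩
  · rcases Nat.eq_zero_or_pos n with rfl | hn
    · simpa [_root_.spliceAt] using ht.1.trans hs.1
    · simpa [_root_.spliceAt, hn] using hs.1
  · rcases lt_trichotomy (k + 1) n with h | h | h
    · simpa [_root_.spliceAt, h, Nat.lt_of_succ_lt h] using hs.2 k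
    · subst h
      simpa [_root_.spliceAt, ht.1] using hs.2 k
    · have e : k + 1 - n = k - n + 1 := by omega
      simpa [_root_.spliceAt, show ¬ k < n by omega, show ¬ k + 1 < n by omega, e] using
        ht.2 (k - n)

end IsTraj

theorem Dense.of_finite_union {X : Type*} [TopologicalSpace X] [T1Space X]
    [∀ x : X, NeBot (𝓝[≠] x)] {A B : Set X} (hA : A.Finite) (h : Dense (A ∪ B)) : Dense B :=
  (h.sdiff_finite hA).mono (by simp)

theorem stmt10_general {X : Type*} [MetricSpace X]
    (G : Set (X × X))
    (hiso : ∀ z : X, ¬ IsOpen ({z} : Set X))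
    (x : X) (hx : x ∈ Trans1 G) :
    ∀ s : ℕ → X, IsTraj G x s → ∀ n : ℕ, s n ∈ Trans1 G := by
  intro s hs n
  have : ∀ z : X, NeBot (𝓝[≠] z) := fun z =>
    neBot_iff.2 fun h => hiso z ((isOpen_singleton_iff_punctured_nhds z).2 h)
  refine ⟨hs.legal n, fun t ht => ?_⟩
  -- Prefixing `t` with the first `n` terms of `s` gives a trajectory of `x`, hence a dense orbit;
  -- removing finitely many points from a dense set keeps it dense.
  have hdense := (hx.2 _ (hs.spliceAt n ht)).mono (range_spliceAt_subset s t n)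
  exact hdense.of_finite_union ((Set.finite_Iio n).image s)

/-- If `X` has no isolated points and `x ∈ trans₁(G)`, then every coordinate of
every trajectory of `x` belongs to `trans₁(G)`. -/
theorem stmt10 {X : Type*} [MetricSpace X] [CompactSpace X] [Nonempty X]
    (G : Set (X × X)) (hGc : IsClosed G) (hGne : G.Nonempty)
    (hiso : ∀ z : X, ¬ IsOpen ({z} : Set X))
    (x : X) (hx : x ∈ Trans1 G) :
    ∀ s : ℕ → X, IsTraj G x s → ∀ n : ℕ, s n ∈ Trans1 G :=
  stmt10_general G hiso x hx
end

section
/- Let (X,G) be a CR-dynamical system and let x ∈ X be a point that is not an isolated point of X. If x ∈ trans_2(G), then there is a legal point y ∈ X such that (x,y) ∈ G and y ∈ trans_2(G). -/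
/-- If `x` is not an isolated point of `X` and `x ∈ trans₂(G)`, then there is a
legal `y` with `(x, y) ∈ G` and `y ∈ trans₂(G)`. -/
theorem stmt11 {X : Type*} [MetricSpace X] [CompactSpace X] [Nonempty X]
    (G : Set (X × X)) (hGc : IsClosed G) (hGne : G.Nonempty)
    (x : X) (hx : ¬ IsOpen ({x} : Set X)) (hx2 : x ∈ Trans2 G) :
    ∃ y : X, Legal G y ∧ (x, y) ∈ G ∧ y ∈ Trans2 G := by
  obtain ⟨s, ⟨hs0, hsG⟩, hsd⟩ := hx2
  refine ⟨s 1, ⟨fun n => s (n + 1), rfl, fun n => hsG (n + 1)⟩, ?_, ?_⟩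
  · simpa [hs0] using hsG 0
  · refine ⟨fun n => s (n + 1), ⟨rfl, fun n => hsG (n + 1)⟩, ?_⟩
    have hne : Filter.NeBot (nhdsWithin x {x}ᶜ) := by
      rw [Filter.neBot_iff]
      intro h
      exact hx ((isOpen_singleton_iff_punctured_nhds x).2 h)
    have hd : Dense (Set.range s \ {x}) := hsd.diff_singleton x
    refine hd.mono ?_
    rintro _ ⟨⟨n, rfl⟩, hne'⟩
    cases n with
    | zero => exact absurd hs0 hne'
    | succ k => exact ⟨k, rfl⟩
end

section
/- Let (X,G) be a CR-dynamical system such that X has no isolated points and let x ∈ X. If x ∈ trans_2(G), then there is a trajectory 𝐱 of x such that the forward orbit O_G^⊕(𝐱) is dense in X and, for each positive integer n, the n-th coordinate π_n(𝐱) belongs to trans_2(G). -/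
/-- If `X` has no isolated points and `x ∈ trans₂(G)`, then `x` has a trajectory
with dense forward orbit all of whose coordinates are in `trans₂(G)`. -/
theorem stmt12 {X : Type*} [MetricSpace X] [CompactSpace X] [Nonempty X]
    (G : Set (X × X)) (hGc : IsClosed G) (hGne : G.Nonempty)
    (hiso : ∀ z : X, ¬ IsOpen ({z} : Set X))
    (x : X) (hx : x ∈ Trans2 G) :
    ∃ s : ℕ → X, IsTraj G x s ∧ Dense (Set.range s) ∧
      ∀ n : ℕ, s n ∈ Trans2 G := by
  obtain ⟨s, hs, hd⟩ := hx
  haveI : ∀ z : X, Filter.NeBot (nhdsWithin z {z}ᶜ) := by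
    intro z
    rw [Filter.neBot_iff]
    intro hb
    exact hiso z (isOpen_singleton_iff_punctured_nhds z |>.mpr hb)
  refine ⟨s, hs, hd, fun n => ?_⟩
  refine ⟨fun k => s (n + k), ⟨rfl, fun k => by have := hs.2 (n + k); rwa [Nat.add_assoc] at this⟩, ?_⟩
  have hfin : (s '' {k | k < n}).Finite := (Set.finite_Iio n).image s
  have hsub : Set.range s \ (s '' {k | k < n}) ⊆ Set.range fun k => s (n + k) := by
    rintro y ⟨⟨k, rfl⟩, hy⟩
    have hk : ¬ k < n := fun h => hy ⟨k, h, rfl⟩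
    exact ⟨k - n, by simp only []; rw [Nat.add_sub_cancel' (Nat.le_of_not_lt hk)]⟩
  exact Dense.mono hsub (hd.diff_finite hfin)
end

section
/- Let (X,G) be a CR-dynamical system such that X has no isolated points, and let k ∈ {1,2}. If trans_k(G) ≠ ∅, then trans_k(G) is dense in X. -/
lemma dense_of_dense_union_finite {X : Type*} [MetricSpace X]
    (hiso : ∀ z : X, ¬ IsOpen ({z} : Set X)) {A F : Set X}
    (hF : F.Finite) (h : Dense (A ∪ F)) : Dense A := by
  haveI : ∀ x : X, Filter.NeBot (nhdsWithin x {x}ᶜ) := fun x => by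
    rw [← mem_closure_iff_nhdsWithin_neBot]
    exact (dense_compl_singleton_iff_not_open.2 (hiso x)) x
  have hd := h.diff_finite hF
  refine hd.mono ?_
  rintro y ⟨hy1 | hy1, hy2⟩
  · exact hy1
  · exact absurd hy1 hy2

lemma shift_traj {X : Type*} {G : Set (X × X)} {x : X} {s : ℕ → X}
    (hs : IsTraj G x s) (n : ℕ) : IsTraj G (s n) (fun m => s (m + n)) :=
  ⟨by simp, fun m => by simpa [Nat.add_right_comm] using hs.2 (m + n)⟩

lemma concat_traj {X : Type*} {G : Set (X × X)} {x : X} {s t : ℕ → X}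
    (hs : IsTraj G x s) (n : ℕ) (ht : IsTraj G (s n) t) :
    IsTraj G x (fun m => if m < n then s m else t (m - n)) := by
  constructor
  · by_cases h : 0 < n
    · simp [h, hs.1]
    · have hn : n = 0 := by omega
      simp only [hn, Nat.sub_zero, Nat.lt_irrefl, if_false]
      rw [ht.1, hn, hs.1]
  · intro m
    rcases lt_trichotomy (m + 1) n with h | h | h
    · have hm : m < n := by omega
      simp only [hm, h, if_true]
      exact hs.2 m
    · subst h
      simp only [Nat.lt_succ_self, if_true, lt_irrefl, if_false, Nat.sub_self]
      rw [ht.1]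
      exact hs.2 m
    · have hm : ¬ m < n := by omega
      have hm1 : ¬ m + 1 < n := by omega
      simp only [hm, hm1, if_false]
      have : m + 1 - n = (m - n) + 1 := by omega
      rw [this]
      exact ht.2 (m - n)

lemma concat_range_subset {X : Type*} (s t : ℕ → X) (n : ℕ) :
    Set.range (fun m => if m < n then s m else t (m - n)) ⊆
      (s '' {i | i < n}) ∪ Set.range t := by
  rintro y ⟨m, rfl⟩
  by_cases h : m < n
  · exact Or.inl ⟨m, h, by simp [h]⟩
  · exact Or.inr ⟨m - n, by simp [h]⟩

/-- If `X` has no isolated points and `trans_k(G) ≠ ∅` for `k ∈ {1, 2}`, then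
`trans_k(G)` is dense in `X`. -/
theorem stmt13 {X : Type*} [MetricSpace X] [CompactSpace X] [Nonempty X]
    (G : Set (X × X)) (hGc : IsClosed G) (hGne : G.Nonempty)
    (hiso : ∀ z : X, ¬ IsOpen ({z} : Set X)) :
    ((Trans1 G).Nonempty → Dense (Trans1 G)) ∧
    ((Trans2 G).Nonempty → Dense (Trans2 G)) := by
  constructor
  · rintro ⟨x, hleg, hall⟩
    obtain ⟨s, hs⟩ := hleg
    have hds : Dense (Set.range s) := hall s hs
    have hsub : Set.range s ⊆ Trans1 G := by
      rintro y ⟨n, rfl⟩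
      refine ⟨⟨_, shift_traj hs n⟩, fun t ht => ?_⟩
      have hu := concat_traj hs n ht
      have hdu : Dense (Set.range (fun m => if m < n then s m else t (m - n))) :=
        hall _ hu
      have : Dense (Set.range t ∪ (s '' {i | i < n})) := by
        refine hdu.mono ?_
        intro y hy
        rcases concat_range_subset s t n hy with h | h
        · exact Or.inr h
        · exact Or.inl h
      exact dense_of_dense_union_finite hiso
        ((Set.finite_Iio n).image s) this
    exact hds.mono hsub
  · rintro ⟨x, s, hs, hds⟩
    have hsub : Set.range s ⊆ Trans2 G := by
      rintro y ⟨n, rfl⟩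
      refine ⟨_, shift_traj hs n, ?_⟩
      have : Dense (Set.range (fun m => s (m + n)) ∪ (s '' {i | i < n})) := by
        refine hds.mono ?_
        rintro y ⟨m, rfl⟩
        by_cases h : m < n
        · exact Or.inr ⟨m, h, rfl⟩
        · exact Or.inl ⟨m - n, by simp; congr 1; omega⟩
      exact dense_of_dense_union_finite hiso
        ((Set.finite_Iio n).image s) this
    exact hds.mono hsub
end

section
/- Let (X,G) be a CR-dynamical system such that X has no isolated points, and let k ∈ {1,2}. If trans_k(G) ≠ ∅, then illegal(G) = ∅, i.e., every point of X is legal. -/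
theorem trans2_aux {X : Type*} [MetricSpace X] [CompactSpace X] [Nonempty X]
    (G : Set (X × X)) (hGc : IsClosed G) :
    (Trans2 G).Nonempty → ∀ x : X, Legal G x := by
  rintro ⟨x₀, s, ⟨hs0, hsG⟩, hdense⟩ x
  set L : Set (ℕ → X) := {t : ℕ → X | ∀ i, (t i, t (i + 1)) ∈ G} with hL
  have hLclosed : IsClosed L := by
    have : L = ⋂ i : ℕ, (fun t : ℕ → X => (t i, t (i + 1))) ⁻¹' G := by
      ext t; simp [hL, Set.mem_iInter]
    rw [this]
    exact isClosed_iInter fun i =>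
      hGc.preimage (((continuous_apply i).prodMk (continuous_apply (i + 1))))
  have hLcompact : IsCompact L := hLclosed.isCompact
  have hKcompact : IsCompact ((fun t : ℕ → X => t 0) '' L) :=
    hLcompact.image (continuous_apply 0)
  have hKclosed : IsClosed ((fun t : ℕ → X => t 0) '' L) := hKcompact.isClosed
  have hsub : Set.range s ⊆ (fun t : ℕ → X => t 0) '' L := by
    rintro _ ⟨n, rfl⟩
    exact ⟨fun i => s (n + i), fun i => by simpa [Nat.add_assoc] using hsG (n + i), rfl⟩
  have h1 : closure (Set.range s) ⊆ (fun t : ℕ → X => t 0) '' L :=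
    hKclosed.closure_subset_iff.mpr hsub
  have hx : x ∈ (fun t : ℕ → X => t 0) '' L := h1 (hdense.closure_eq ▸ Set.mem_univ x)
  obtain ⟨t, htL, ht0⟩ := hx
  exact ⟨t, ht0, htL⟩

/-- If `X` has no isolated points and `trans_k(G) ≠ ∅` for `k ∈ {1, 2}`, then
`illegal(G) = ∅`, i.e. every point of `X` is legal. -/
theorem stmt14 {X : Type*} [MetricSpace X] [CompactSpace X] [Nonempty X]
    (G : Set (X × X)) (hGc : IsClosed G) (hGne : G.Nonempty)
    (hiso : ∀ z : X, ¬ IsOpen ({z} : Set X)) :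
    ((Trans1 G).Nonempty → ∀ x : X, Legal G x) ∧
    ((Trans2 G).Nonempty → ∀ x : X, Legal G x) := by
  constructor
  · rintro ⟨x₀, hleg, hall⟩
    obtain ⟨s, hs⟩ := hleg
    exact trans2_aux G hGc ⟨x₀, s, hs, hall s hs⟩
  · exact trans2_aux G hGc
end

section
/- Let (X,G) be a CR-dynamical system and let k ∈ {1,2,3}. If (X,G) is k-DO-transitive (i.e., trans_k(G) ≠ ∅), then p_1(G) = X, i.e., for every t ∈ X there is y ∈ X with (t,y) ∈ G. -/
/-- If `(X, G)` is `k`-DO-transitive for some `k ∈ {1, 2, 3}` (i.e.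
`trans_k(G) ≠ ∅`), then `p₁(G) = X`. -/
theorem stmt15 {X : Type*} [MetricSpace X] [CompactSpace X] [Nonempty X]
    (G : Set (X × X)) (hGc : IsClosed G) (hGne : G.Nonempty) :
    ((Trans1 G).Nonempty → Prod.fst '' G = Set.univ) ∧
    ((Trans2 G).Nonempty → Prod.fst '' G = Set.univ) ∧
    ((Trans3 G).Nonempty → Prod.fst '' G = Set.univ) := by
  have hclosed : IsClosed (Prod.fst '' G) :=
    ((hGc.isCompact).image continuous_fst).isClosed
  have key : ∀ S : Set X, Dense S → S ⊆ Prod.fst '' G → Prod.fst '' G = Set.univ := by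
    intro S hd hsub
    apply Set.eq_univ_of_univ_subset
    rw [← hd.closure_eq]
    exact closure_minimal hsub hclosed
  have h2 : (Trans2 G).Nonempty → Prod.fst '' G = Set.univ := by
    rintro ⟨x, s, ⟨-, hstep⟩, hdense⟩
    refine key _ hdense ?_
    rintro y ⟨n, rfl⟩
    exact ⟨(s n, s (n+1)), hstep n, rfl⟩
  refine ⟨?_, h2, ?_⟩
  · rintro ⟨x, ⟨s, hs⟩, hall⟩
    exact h2 ⟨x, s, hs, hall s hs⟩
  · rintro ⟨x, -, hdense⟩
    refine key _ hdense ?_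
    rintro y hy
    simp only [UOrb, Set.mem_iUnion] at hy
    obtain ⟨s, ⟨-, hstep⟩, n, rfl⟩ := hy
    exact ⟨(s n, s (n+1)), hstep n, rfl⟩
end

section
/- Let (X,G) be a CR-dynamical system such that X has no isolated points or X is a single point, and let k ∈ {1,2,3}. If (X,G) is k-DO-transitive (i.e., trans_k(G) ≠ ∅), then p_1(G) = p_2(G) = X. -/
theorem stmt16_aux {X : Type*} [MetricSpace X] [CompactSpace X] [Nonempty X]
    (G : Set (X × X)) (hGc : IsClosed G) (hGne : G.Nonempty)
    (hX : (∀ z : X, ¬ IsOpen ({z} : Set X)) ∨ Subsingleton X)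
    (h : (Trans3 G).Nonempty) :
    Prod.fst '' G = Set.univ ∧ Prod.snd '' G = Set.univ := by
  obtain ⟨x, _, hdense⟩ := h
  have h1closed : IsClosed (Prod.fst '' G) := (hGc.isCompact.image continuous_fst).isClosed
  have h2closed : IsClosed (Prod.snd '' G) := (hGc.isCompact.image continuous_snd).isClosed
  have hU1 : UOrb G x ⊆ Prod.fst '' G := by
    rintro y hy
    simp only [UOrb, Set.mem_iUnion, Set.mem_setOf_eq, Set.mem_range] at hy
    obtain ⟨s, hs, n, rfl⟩ := hy
    exact ⟨(s n, s (n+1)), hs.2 n, rfl⟩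
  have hp1 : Prod.fst '' G = Set.univ := by
    have := (hdense.mono hU1).closure_eq
    rwa [h1closed.closure_eq] at this
  refine ⟨hp1, ?_⟩
  rcases hX with hX | hX
  · have hU2 : UOrb G x ⊆ {x} ∪ Prod.snd '' G := by
      rintro y hy
      simp only [UOrb, Set.mem_iUnion, Set.mem_setOf_eq, Set.mem_range] at hy
      obtain ⟨s, hs, n, rfl⟩ := hy
      cases n with
      | zero => exact Or.inl (by simp [hs.1])
      | succ m => exact Or.inr ⟨(s m, s (m+1)), hs.2 m, rfl⟩
    have hCclosed : IsClosed ({x} ∪ Prod.snd '' G) := isClosed_singleton.union h2closed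
    have hCuniv : {x} ∪ Prod.snd '' G = Set.univ := by
      have := (hdense.mono hU2).closure_eq
      rwa [hCclosed.closure_eq] at this
    have hsub : {x}ᶜ ⊆ Prod.snd '' G := by
      intro y hy
      have : y ∈ {x} ∪ Prod.snd '' G := hCuniv ▸ Set.mem_univ y
      rcases this with h | h
      · exact absurd h hy
      · exact h
    have hx : x ∈ Prod.snd '' G := by
      by_contra hx
      have heq : Prod.snd '' G = {x}ᶜ := Set.Subset.antisymm
        (fun y hy hyx => hx (Set.mem_singleton_iff.mp hyx ▸ hy)) hsub
      have : IsOpen ({x} : Set X) := by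
        have := h2closed
        rw [heq] at this
        simpa using this.isOpen_compl
      exact hX x this
    apply Set.eq_univ_of_forall
    intro y
    by_cases hy : y = x
    · exact hy ▸ hx
    · exact hsub hy
  · obtain ⟨p, hp⟩ := hGne
    apply Set.eq_univ_of_forall
    intro y
    have : y = p.2 := Subsingleton.elim _ _
    exact this ▸ ⟨p, hp, rfl⟩

/-- If `X` has no isolated points or `X` is a single point, and `(X, G)` is
`k`-DO-transitive for some `k ∈ {1, 2, 3}`, then `p₁(G) = p₂(G) = X`. -/
theorem stmt16 {X : Type*} [MetricSpace X] [CompactSpace X] [Nonempty X]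
    (G : Set (X × X)) (hGc : IsClosed G) (hGne : G.Nonempty)
    (hX : (∀ z : X, ¬ IsOpen ({z} : Set X)) ∨ Subsingleton X) :
    ((Trans1 G).Nonempty →
      Prod.fst '' G = Set.univ ∧ Prod.snd '' G = Set.univ) ∧
    ((Trans2 G).Nonempty →
      Prod.fst '' G = Set.univ ∧ Prod.snd '' G = Set.univ) ∧
    ((Trans3 G).Nonempty →
      Prod.fst '' G = Set.univ ∧ Prod.snd '' G = Set.univ) := by
  refine ⟨?_, ?_, fun h => stmt16_aux G hGc hGne hX h⟩
  · rintro ⟨x, hleg, hall⟩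
    obtain ⟨s, hs⟩ := hleg
    refine stmt16_aux G hGc hGne hX ⟨x, ⟨s, hs⟩, (hall s hs).mono ?_⟩
    exact Set.subset_biUnion_of_mem hs
  · rintro ⟨x, s, hs, hd⟩
    refine stmt16_aux G hGc hGne hX ⟨x, ⟨s, hs⟩, hd.mono ?_⟩
    exact Set.subset_biUnion_of_mem hs
end

section
/- Let (X,G) be a CR-dynamical system. Then the following four statements are equivalent: (1) (X,G) is transitive; (3) for each nonempty open set U ⊆ X the set ⋃_{k=0}^{∞} G^k(U) is dense in X; (5) for all nonempty open sets U,V ⊆ X there is a non-negative integer n with G^{-n}(U) ∩ V ≠ ∅; (7) for each nonempty open set U ⊆ X the set ⋃_{k=0}^{∞} G^{-k}(U) is dense in X. Likewise, the following four statements are equivalent: (2) (X,G) is +transitive; (4) for each nonempty open set U ⊆ X the set ⋃_{k=1}^{∞} G^k(U) is dense in X; (6) for all nonempty open sets U,V ⊆ X there is a positive integer n with G^{-n}(U) ∩ V ≠ ∅; (8) for each nonempty open set U ⊆ X the set ⋃_{k=1}^{∞} G^{-k}(U) is dense in X. Moreover, if X has no isolated points, then all eight statements are equivalent. -/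
lemma relImg_mono {X : Type*} {G : Set (X × X)} {n : ℕ} {A B : Set X} (h : A ⊆ B) :
    RelImg G n A ⊆ RelImg G n B := by
  rintro y ⟨x, hx, f, hf⟩; exact ⟨x, h hx, f, hf⟩

lemma relImg_zero {X : Type*} {G : Set (X × X)} {A : Set X} : RelImg G 0 A = A := by
  ext y
  constructor
  · rintro ⟨x, hx, f, h0, hn, _⟩; rw [← hn, h0]; exact hx
  · intro hy; exact ⟨y, hy, fun _ => y, rfl, rfl, fun i h => absurd h (Nat.not_lt_zero i)⟩

lemma rev_dir {X : Type*} {G : Set (X × X)} {n : ℕ} {U V : Set X}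
    (h : (RelImg G n U ∩ V).Nonempty) : (RelImg (RelInv G) n V ∩ U).Nonempty := by
  obtain ⟨y, ⟨x, hxU, f, hf0, hfn, hstep⟩, hyV⟩ := h
  refine ⟨x, ⟨y, hyV, fun i => f (n - i),
    by simp [hfn], by simp [hf0], ?_⟩, hxU⟩
  intro i hi
  have h1 : (f (n - i - 1), f (n - i - 1 + 1)) ∈ G := hstep _ (by omega)
  rw [show n - i - 1 + 1 = n - i from by omega] at h1
  exact h1

lemma rev_iff {X : Type*} {G : Set (X × X)} {n : ℕ} {U V : Set X} :
    (RelImg G n U ∩ V).Nonempty ↔ (RelImg (RelInv G) n V ∩ U).Nonempty := by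
  constructor
  · exact rev_dir
  · intro h
    have h2 := rev_dir h
    have hGG : RelInv (RelInv G) = G := rfl
    rwa [hGG] at h2

lemma dense_union_iff' {X : Type*} [MetricSpace X] (S : ℕ → Set X) :
    Dense (⋃ k, S k) ↔ ∀ V : Set X, IsOpen V → V.Nonempty → ∃ n, (S n ∩ V).Nonempty := by
  rw [dense_iff_inter_open]
  constructor
  · intro h V hV hVne
    obtain ⟨y, hyV, hyU⟩ := h V hV hVne
    obtain ⟨n, hn⟩ := Set.mem_iUnion.mp hyU
    exact ⟨n, y, hn, hyV⟩
  · intro h V hV hVne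
    obtain ⟨n, y, hyS, hyV⟩ := h V hV hVne
    exact ⟨y, hyV, Set.mem_iUnion.mpr ⟨n, hyS⟩⟩

/-- Characterizations of transitivity and +transitivity of `(X, G)`:
conditions (1), (3), (5), (7) are equivalent; conditions (2), (4), (6), (8) are
equivalent; and if `X` has no isolated points, then all eight are equivalent. -/
theorem stmt17 {X : Type*} [MetricSpace X] [CompactSpace X] [Nonempty X]
    (G : Set (X × X)) (hGc : IsClosed G) (hGne : G.Nonempty) :
    ((CRTransitive G ↔
        ∀ U : Set X, IsOpen U → U.Nonempty → Dense (⋃ k : ℕ, RelImg G k U)) ∧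
     (CRTransitive G ↔
        ∀ U V : Set X, IsOpen U → U.Nonempty → IsOpen V → V.Nonempty →
          ∃ n : ℕ, (RelImg (RelInv G) n U ∩ V).Nonempty) ∧
     (CRTransitive G ↔
        ∀ U : Set X, IsOpen U → U.Nonempty →
          Dense (⋃ k : ℕ, RelImg (RelInv G) k U))) ∧
    ((CRPlusTransitive G ↔
        ∀ U : Set X, IsOpen U → U.Nonempty →
          Dense (⋃ k : ℕ, RelImg G (k + 1) U)) ∧
     (CRPlusTransitive G ↔
        ∀ U V : Set X, IsOpen U → U.Nonempty → IsOpen V → V.Nonempty →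
          ∃ n : ℕ, 0 < n ∧ (RelImg (RelInv G) n U ∩ V).Nonempty) ∧
     (CRPlusTransitive G ↔
        ∀ U : Set X, IsOpen U → U.Nonempty →
          Dense (⋃ k : ℕ, RelImg (RelInv G) (k + 1) U))) ∧
    ((∀ z : X, ¬ IsOpen ({z} : Set X)) →
      (CRTransitive G ↔ CRPlusTransitive G)) := by
  refine ⟨⟨?_, ?_, ?_⟩, ⟨?_, ?_, ?_⟩, ?_⟩
  · -- (1) ↔ (3)
    constructor
    · intro h U hU hUne
      rw [dense_union_iff']
      intro V hV hVne
      exact h U V hU hUne hV hVne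
    · intro h U V hU hUne hV hVne
      exact (dense_union_iff' _).mp (h U hU hUne) V hV hVne
  · -- (1) ↔ (5)
    constructor
    · intro h U V hU hUne hV hVne
      obtain ⟨n, hn⟩ := h V U hV hVne hU hUne
      exact ⟨n, rev_dir hn⟩
    · intro h U V hU hUne hV hVne
      obtain ⟨n, hn⟩ := h V U hV hVne hU hUne
      exact ⟨n, rev_iff.mpr hn⟩
  · -- (1) ↔ (7)
    constructor
    · intro h U hU hUne
      rw [dense_union_iff']
      intro V hV hVne
      obtain ⟨n, hn⟩ := h V U hV hVne hU hUne
      exact ⟨n, rev_dir hn⟩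
    · intro h U V hU hUne hV hVne
      obtain ⟨n, hn⟩ := (dense_union_iff' _).mp (h V hV hVne) U hU hUne
      exact ⟨n, rev_iff.mpr hn⟩
  · -- (2) ↔ (4)
    constructor
    · intro h U hU hUne
      rw [dense_union_iff']
      intro V hV hVne
      obtain ⟨n, hn, h'⟩ := h U V hU hUne hV hVne
      obtain ⟨k, rfl⟩ := Nat.exists_eq_add_of_lt hn
      exact ⟨k, by simpa [Nat.add_comm] using h'⟩
    · intro h U V hU hUne hV hVne
      obtain ⟨k, hk⟩ := (dense_union_iff' _).mp (h U hU hUne) V hV hVne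
      exact ⟨k + 1, Nat.succ_pos k, hk⟩
  · -- (2) ↔ (6)
    constructor
    · intro h U V hU hUne hV hVne
      obtain ⟨n, hn, h'⟩ := h V U hV hVne hU hUne
      exact ⟨n, hn, rev_dir h'⟩
    · intro h U V hU hUne hV hVne
      obtain ⟨n, hn, h'⟩ := h V U hV hVne hU hUne
      exact ⟨n, hn, rev_iff.mpr h'⟩
  · -- (2) ↔ (8)
    constructor
    · intro h U hU hUne
      rw [dense_union_iff']
      intro V hV hVne
      obtain ⟨n, hn, h'⟩ := h V U hV hVne hU hUne
      obtain ⟨k, rfl⟩ := Nat.exists_eq_add_of_lt hn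
      exact ⟨k, by simpa [Nat.add_comm] using rev_dir h'⟩
    · intro h U V hU hUne hV hVne
      obtain ⟨k, hk⟩ := (dense_union_iff' _).mp (h V hV hVne) U hU hUne
      exact ⟨k + 1, Nat.succ_pos k, rev_iff.mpr hk⟩
  · -- no isolated points: (1) ↔ (2)
    intro hiso
    constructor
    · intro htr U V hU hUne hV hVne
      obtain ⟨n, hn⟩ := htr U V hU hUne hV hVne
      rcases Nat.eq_zero_or_pos n with rfl | hpos
      · rw [relImg_zero] at hn
        obtain ⟨x, hxU, hxV⟩ := hn
        have hW : IsOpen (U ∩ V) := hU.inter hV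
        have hxW : x ∈ U ∩ V := ⟨hxU, hxV⟩
        obtain ⟨y, hyW, hyx⟩ : ∃ y ∈ U ∩ V, y ≠ x := by
          by_contra hc
          push_neg at hc
          have hEq : U ∩ V = {x} :=
            le_antisymm (fun z hz => hc z hz) (Set.singleton_subset_iff.mpr hxW)
          exact hiso x (hEq ▸ hW)
        have hd : 0 < dist x y := dist_pos.mpr (Ne.symm hyx)
        set r := dist x y / 2 with hr
        have hU₁ : IsOpen ((U ∩ V) ∩ Metric.ball x r) := hW.inter Metric.isOpen_ball
        have hV₁ : IsOpen ((U ∩ V) ∩ Metric.ball y r) := hW.inter Metric.isOpen_ball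
        have hxU₁ : x ∈ (U ∩ V) ∩ Metric.ball x r := ⟨hxW, by simp [Metric.mem_ball]; linarith⟩
        have hyV₁ : y ∈ (U ∩ V) ∩ Metric.ball y r := ⟨hyW, by simp [Metric.mem_ball]; linarith⟩
        obtain ⟨m, hm⟩ := htr _ _ hU₁ ⟨x, hxU₁⟩ hV₁ ⟨y, hyV₁⟩
        rcases Nat.eq_zero_or_pos m with rfl | hmpos
        · rw [relImg_zero] at hm
          obtain ⟨z, ⟨_, hz1⟩, _, hz2⟩ := hm
          rw [Metric.mem_ball] at hz1 hz2
          have := dist_triangle x z y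
          rw [dist_comm x z] at this
          linarith
        · obtain ⟨w, hw1, hw2⟩ := hm
          exact ⟨m, hmpos,
            ⟨w, relImg_mono (fun z hz => hz.1.1) hw1, hw2.1.2⟩⟩
      · exact ⟨n, hpos, hn⟩
    · intro h U V hU hUne hV hVne
      obtain ⟨n, _, hn⟩ := h U V hU hUne hV hVne
      exact ⟨n, hn⟩
end

section
/- Let (X,G) be a CR-dynamical system such that trans_2(G) ≠ ∅. If X has no isolated points, then (X,G) is transitive. -/
/-!
A dense trajectory `s` passes through `U` at some time `i`. Since `X` has no isolated points,
removing the finitely many points `s 0, …, s i` from the range of `s` leaves a dense set, so the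
trajectory later visits `V` at some time `j > i`; the segment from `i` to `j` witnesses
`G^(j-i)(U) ∩ V ≠ ∅`.
-/

open Set Filter Topology

lemma IsTraj.mem_relImg {X : Type*} {G : Set (X × X)} {x : X} {s : ℕ → X} (hs : IsTraj G x s)
    {A : Set X} {i j : ℕ} (hi : s i ∈ A) (hij : i ≤ j) : s j ∈ RelImg G (j - i) A :=
  ⟨s i, hi, fun k => s (i + k), rfl, congrArg s (Nat.add_sub_cancel' hij), fun k _ => hs.2 (i + k)⟩

lemma DenseRange.dense_image_Ioi {X : Type*} [TopologicalSpace X] [T1Space X]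
    [∀ x : X, NeBot (𝓝[≠] x)] {s : ℕ → X} (hs : DenseRange s) (i : ℕ) :
    Dense (s '' Ioi i) :=
  (hs.sdiff_finite ((finite_Iic i).image s)).mono <| by
    rintro _ ⟨⟨j, rfl⟩, hj⟩
    exact ⟨j, mem_Ioi.2 (not_le.1 fun hji => hj ⟨j, mem_Iic.2 hji, rfl⟩), rfl⟩

lemma crTransitive_of_mem_trans2 {X : Type*} [MetricSpace X] [∀ x : X, NeBot (𝓝[≠] x)]
    {G : Set (X × X)} {x : X} (hx : x ∈ Trans2 G) : CRTransitive G := by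
  obtain ⟨s, hs, hdense : DenseRange s⟩ := hx
  intro U V hU hUne hV hVne
  obtain ⟨i, hiU⟩ := hdense.exists_mem_open hU hUne
  obtain ⟨_, ⟨j, hij, rfl⟩, hjV⟩ := (hdense.dense_image_Ioi i).exists_mem_open hV hVne
  exact ⟨j - i, s j, hs.mem_relImg hiU (le_of_lt hij), hjV⟩

theorem stmt19_general {X : Type*} [MetricSpace X] (G : Set (X × X))
    (h : (Trans2 G).Nonempty)
    (hiso : ∀ z : X, ¬ IsOpen ({z} : Set X)) :
    CRTransitive G := by
  have : ∀ z : X, NeBot (𝓝[≠] z) := fun z =>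
    neBot_iff.2 ((isOpen_singleton_iff_punctured_nhds z).not.1 (hiso z))
  exact crTransitive_of_mem_trans2 h.some_mem

/-- If `trans₂(G) ≠ ∅` and `X` has no isolated points, then `(X, G)` is
transitive. -/
theorem stmt19 {X : Type*} [MetricSpace X] [CompactSpace X] [Nonempty X]
    (G : Set (X × X)) (hGc : IsClosed G) (hGne : G.Nonempty)
    (h : (Trans2 G).Nonempty)
    (hiso : ∀ z : X, ¬ IsOpen ({z} : Set X)) :
    CRTransitive G :=
  stmt19_general G h hiso
end
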